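/- Let ω be the canonical symplectic form on T*Q, γ a one-form on Q, λ = γ ∘ π_Q. Then for all v, w ∈ T_α(T*Q): ω(Tλ·v, w) = ω(v, w - Tλ·w) - dγ(Tπ_Q v, Tπ_Q w). -/

import Mathlib

/-!
In the flat model `T*Q = E × E*`, the tangent map of `λ = γ ∘ π_Q` is `v ↦ (v₁, Dγ v₁)`, so `v - Tλ v`
is vertical. Vertical vectors are `ω`-orthogonal to each other, hence by bilinearity
`ω(Tλ v, w) = ω(v, w - Tλ w) + ω(Tλ v, Tλ w)`, and the last term is `-dγ(v₁, w₁)`.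
-/

section CanonicalForm

open ContinuousLinearMap

def canonicalForm (𝕜 E : Type*) [NontriviallyNormedField 𝕜] [NormedAddCommGroup E]
    [NormedSpace 𝕜 E] : (E × (E →L[𝕜] 𝕜)) →ₗ[𝕜] (E × (E →L[𝕜] 𝕜)) →ₗ[𝕜] 𝕜 :=
  LinearMap.mk₂ 𝕜 (fun u v => v.2 u.1 - u.2 v.1)
    (fun u u' v => by simp only [Prod.fst_add, Prod.snd_add, map_add, add_apply]; abel)
    (fun c u v => by simp only [Prod.smul_fst, Prod.smul_snd, map_smul, smul_apply, smul_eq_mul]; ring)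
    (fun u v v' => by simp only [Prod.fst_add, Prod.snd_add, map_add, add_apply]; abel)
    (fun c u v => by simp only [Prod.smul_fst, Prod.smul_snd, map_smul, smul_apply, smul_eq_mul]; ring)

variable {𝕜 : Type*} [NontriviallyNormedField 𝕜] {E : Type*} [NormedAddCommGroup E]
  [NormedSpace 𝕜 E]

@[simp]
theorem canonicalForm_apply (u v : E × (E →L[𝕜] 𝕜)) :
    canonicalForm 𝕜 E u v = v.2 u.1 - u.2 v.1 :=
  rfl

theorem canonicalForm_eq_zero_of_fst_eq_zero {u v : E × (E →L[𝕜] 𝕜)} (hu : u.1 = 0)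
    (hv : v.1 = 0) : canonicalForm 𝕜 E u v = 0 := by
  simp [hu, hv]

def graphTangent (L : E →L[𝕜] (E →L[𝕜] 𝕜)) :
    (E × (E →L[𝕜] 𝕜)) →L[𝕜] (E × (E →L[𝕜] 𝕜)) :=
  (fst 𝕜 E (E →L[𝕜] 𝕜)).prod (L.comp (fst 𝕜 E (E →L[𝕜] 𝕜)))

theorem fderiv_graph_comp_fst {γ : E → (E →L[𝕜] 𝕜)} {α : E × (E →L[𝕜] 𝕜)}
    (hγ : DifferentiableAt 𝕜 γ α.1) :
    fderiv 𝕜 (fun z : E × (E →L[𝕜] 𝕜) => (z.1, γ z.1)) α = graphTangent (fderiv 𝕜 γ α.1) :=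
  (hasFDerivAt_fst.prodMk (hγ.hasFDerivAt.comp α hasFDerivAt_fst)).fderiv

theorem fst_sub_graphTangent (L : E →L[𝕜] (E →L[𝕜] 𝕜)) (v : E × (E →L[𝕜] 𝕜)) :
    (v - graphTangent L v).1 = 0 := by
  simp [graphTangent]

theorem canonicalForm_graphTangent_graphTangent (L : E →L[𝕜] (E →L[𝕜] 𝕜))
    (v w : E × (E →L[𝕜] 𝕜)) :
    canonicalForm 𝕜 E (graphTangent L v) (graphTangent L w) = -(L v.1 w.1 - L w.1 v.1) := by
  simp [graphTangent]

theorem canonicalForm_graphTangent_left (L : E →L[𝕜] (E →L[𝕜] 𝕜)) (v w : E × (E →L[𝕜] 𝕜)) :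
    canonicalForm 𝕜 E (graphTangent L v) w
      = canonicalForm 𝕜 E v (w - graphTangent L w) - (L v.1 w.1 - L w.1 v.1) := by
  set ω := canonicalForm 𝕜 E
  set T := graphTangent L
  have hvert : ω (v - T v) (w - T w) = 0 :=
    canonicalForm_eq_zero_of_fst_eq_zero (fst_sub_graphTangent L v) (fst_sub_graphTangent L w)
  calc ω (T v) w = ω v (w - T w) - ω (v - T v) (w - T w) + ω (T v) (T w) := by
        simp only [map_sub, LinearMap.sub_apply]; abel
    _ = ω v (w - T w) - (L v.1 w.1 - L w.1 v.1) := by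
        rw [hvert, canonicalForm_graphTangent_graphTangent]; ring

end CanonicalForm

/-- Lemma 3.3(ii): for the canonical symplectic form ω on T*Q (flat model
T*Q = E × E*), a one-form γ and λ = γ ∘ π_Q, for all tangent vectors v, w:
ω(Tλ·v, w) = ω(v, w - Tλ·w) - dγ(Tπ_Q v, Tπ_Q w). -/
theorem stmt7 (E : Type*) [NormedAddCommGroup E] [NormedSpace ℝ E]
    (γ : E → (E →L[ℝ] ℝ)) (hγ : Differentiable ℝ γ)
    (ω : (E × (E →L[ℝ] ℝ)) → (E × (E →L[ℝ] ℝ)) → ℝ)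
    (hω : ∀ u v, ω u v = v.2 u.1 - u.2 v.1) :
    ∀ (α : E × (E →L[ℝ] ℝ)) (v w : E × (E →L[ℝ] ℝ)),
      ω ((fderiv ℝ (fun z : E × (E →L[ℝ] ℝ) => (z.1, γ z.1)) α) v) w
        = ω v (w - (fderiv ℝ (fun z : E × (E →L[ℝ] ℝ) => (z.1, γ z.1)) α) w)
          - ((fderiv ℝ γ α.1 v.1) w.1 - (fderiv ℝ γ α.1 w.1) v.1) := by
  intro α v w
  have hω_eq : ∀ u u', ω u u' = canonicalForm ℝ E u u' := hω
  rw [fderiv_graph_comp_fst (hγ α.1), hω_eq, hω_eq]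
  exact canonicalForm_graphTangent_left _ v w
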